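/- arXiv:1705.01736 — 5 statements merged into one kernel-verified Lean document; each statement's English description precedes it below -/
import Mathlib

section
/- Let p be a probability distribution on ℝ supported on exactly three points x₁ < x₂ < x₃, in general position (unique median, no voter ties, strict majority winners), serving as both candidate and voter distribution. Then the expected distortion Social(p,p) is at most 4 − 2√2. -/
open Finset

/-- Social cost of a candidate at `x` on the real line:
average distance to the voters, who have mass `q j` at each `j ∈ s`. -/
noncomputable def lcost (s : Finset ℝ) (q : ℝ → ℝ) (x : ℝ) : ℝ :=
  ∑ j ∈ s, q j * |x - j|

/-- Total voter mass strictly preferring candidate `x` over candidate `y`. -/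
noncomputable def lvotes (s : Finset ℝ) (q : ℝ → ℝ) (x y : ℝ) : ℝ :=
  ∑ j ∈ s.filter (fun j => |x - j| < |y - j|), q j

/-- The majority winner of the election between candidates `x` and `y`. -/
noncomputable def lwin (s : Finset ℝ) (q : ℝ → ℝ) (x y : ℝ) : ℝ :=
  if 1/2 < lvotes s q x y then x else y

/-- The socially better of the two candidates `x`, `y`. -/
noncomputable def lopt (s : Finset ℝ) (q : ℝ → ℝ) (x y : ℝ) : ℝ :=
  if lcost s q x < lcost s q y then x else y

/-- Pairwise distortion of the election between `x` and `y`. -/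
noncomputable def lr (s : Finset ℝ) (q : ℝ → ℝ) (x y : ℝ) : ℝ :=
  lcost s q (lwin s q x y) / lcost s q (lopt s q x y)

/-- Expected distortion: two candidates drawn i.i.d. from `p`, voters distributed as `q`. -/
noncomputable def lsocial (s : Finset ℝ) (p q : ℝ → ℝ) : ℝ :=
  ∑ x ∈ s, ∑ y ∈ s, p x * p y * lr s q x y

/-- `m` is a median of the voter distribution `q` on support `s`. -/
def IsMedian (s : Finset ℝ) (q : ℝ → ℝ) (m : ℝ) : Prop :=
  m ∈ s ∧ (∑ j ∈ s.filter (fun j => j < m), q j) < 1/2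
        ∧ (∑ j ∈ s.filter (fun j => m < j), q j) < 1/2

/-- No voter location is equidistant from two distinct support points. -/
def NoVoterTies (s : Finset ℝ) : Prop :=
  ∀ j ∈ s, ∀ x ∈ s, ∀ y ∈ s, x ≠ y → |x - j| ≠ |y - j|

/-- Every election has a strict majority winner. -/
def StrictMajority (s : Finset ℝ) (q : ℝ → ℝ) : Prop :=
  ∀ x ∈ s, ∀ y ∈ s, x ≠ y → lvotes s q x y ≠ 1/2

lemma key_ineq (a b c d1 d2 : ℝ) (ha : 0 < a) (hc : 0 < c) (hc2 : c < 1/2)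
    (hb : 0 < b) (hsum : a + b + c = 1) (hd1 : 0 < d1) (hd12 : d1 < d2) :
    2*a*c*((b*d1 + c*(d1+d2)) - (a*(d1+d2) + b*d2)) ≤
      (3 - 2*Real.sqrt 2)*(a*(d1+d2) + b*d2) := by
  have s2 : Real.sqrt 2 ^ 2 = 2 := Real.sq_sqrt (by norm_num)
  have s2a : 1 < Real.sqrt 2 := by nlinarith [Real.sqrt_nonneg 2]
  have s2b : Real.sqrt 2 < 3/2 := by nlinarith [Real.sqrt_nonneg 2]
  have hkpos : 0 < 3 - 2*Real.sqrt 2 := by linarith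
  have h3 : 2*a*c*(c-a) ≤ (3 - 2*Real.sqrt 2)*(a + b/2) := by
    rcases le_or_gt c a with h | h
    · nlinarith [mul_pos ha hc]
    · nlinarith [sq_nonneg (c - a - (2 - Real.sqrt 2)/2),
        mul_nonneg (mul_nonneg (sub_nonneg.2 h.le) (by linarith : (0:ℝ) ≤ 1 - 2*c))
          (by linarith : (0:ℝ) ≤ 1 + 2*a)]
  nlinarith [mul_le_mul_of_nonneg_right h3 (by linarith : (0:ℝ) ≤ d1 + d2),
    mul_nonneg (mul_nonneg (mul_nonneg ha.le hc.le) hb.le) (by linarith : (0:ℝ) ≤ d2 - d1),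
    mul_nonneg hkpos.le (mul_nonneg hb.le (by linarith : (0:ℝ) ≤ d2 - d1))]


set_option maxHeartbeats 2000000 in
/-- a probability distribution supported on exactly three points
`x₁ < x₂ < x₃` of the line, in general position, serving as both candidate and
voter distribution, has expected distortion at most `4 - 2√2`. -/
theorem three_point_distortion_le (x1 x2 x3 : ℝ) (h12 : x1 < x2) (h23 : x2 < x3)
    (p : ℝ → ℝ)
    (hpos : ∀ x ∈ ({x1, x2, x3} : Finset ℝ), 0 < p x)
    (hsum : ∑ x ∈ ({x1, x2, x3} : Finset ℝ), p x = 1)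
    (hmedian : ∃! m, IsMedian ({x1, x2, x3} : Finset ℝ) p m)
    (hties : NoVoterTies ({x1, x2, x3} : Finset ℝ))
    (hmaj : StrictMajority ({x1, x2, x3} : Finset ℝ) p) :
    lsocial ({x1, x2, x3} : Finset ℝ) p p ≤ 4 - 2 * Real.sqrt 2 := by
  have h13 : x1 < x3 := h12.trans h23
  have ne12 : x1 ≠ x2 := ne_of_lt h12
  have ne13 : x1 ≠ x3 := ne_of_lt h13
  have ne23 : x2 ≠ x3 := ne_of_lt h23
  set s : Finset ℝ := {x1, x2, x3} with hs
  have hm1 : x1 ∈ s := by simp [hs]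
  have hm2 : x2 ∈ s := by simp [hs]
  have hm3 : x3 ∈ s := by simp [hs]
  have hsum3 : ∀ f : ℝ → ℝ, ∑ x ∈ s, f x = f x1 + f x2 + f x3 := by
    intro f
    rw [hs, Finset.sum_insert (by simp [ne12, ne13]),
        Finset.sum_insert (by simp [ne23]), Finset.sum_singleton, add_assoc]
  set a := p x1 with ha'
  set b := p x2 with hb'
  set c := p x3 with hc'
  have ha : 0 < a := hpos x1 hm1
  have hb : 0 < b := hpos x2 hm2
  have hc : 0 < c := hpos x3 hm3
  have habc : a + b + c = 1 := by rw [← hsum, hsum3 p]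
  -- costs
  have costf : ∀ x, lcost s p x = a*|x-x1| + b*|x-x2| + c*|x-x3| := by
    intro x; rw [lcost, hsum3 (fun j => p j * |x - j|)]
  have hC1 : lcost s p x1 = b*(x2-x1) + c*(x3-x1) := by
    rw [costf, abs_of_nonpos (by linarith : x1 - x1 ≤ 0),
        abs_of_nonpos (by linarith : x1 - x2 ≤ 0),
        abs_of_nonpos (by linarith : x1 - x3 ≤ 0)]; ring
  have hC2 : lcost s p x2 = a*(x2-x1) + c*(x3-x2) := by
    rw [costf, abs_of_nonneg (by linarith : (0:ℝ) ≤ x2 - x1),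
        abs_of_nonpos (by linarith : x2 - x2 ≤ 0),
        abs_of_nonpos (by linarith : x2 - x3 ≤ 0)]; ring
  have hC3 : lcost s p x3 = a*(x3-x1) + b*(x3-x2) := by
    rw [costf, abs_of_nonneg (by linarith : (0:ℝ) ≤ x3 - x1),
        abs_of_nonneg (by linarith : (0:ℝ) ≤ x3 - x2),
        abs_of_nonpos (by linarith : x3 - x3 ≤ 0)]; ring
  have c1pos : 0 < lcost s p x1 := by
    rw [hC1]; nlinarith [mul_pos hb (show (0:ℝ) < x2 - x1 by linarith),
      mul_pos hc (show (0:ℝ) < x3 - x1 by linarith)]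
  have c2pos : 0 < lcost s p x2 := by
    rw [hC2]; nlinarith [mul_pos ha (show (0:ℝ) < x2 - x1 by linarith),
      mul_pos hc (show (0:ℝ) < x3 - x2 by linarith)]
  have c3pos : 0 < lcost s p x3 := by
    rw [hC3]; nlinarith [mul_pos ha (show (0:ℝ) < x3 - x1 by linarith),
      mul_pos hb (show (0:ℝ) < x3 - x2 by linarith)]
  -- votes
  have votesf : ∀ x y, lvotes s p x y =
      (if |x - x1| < |y - x1| then a else 0) + (if |x - x2| < |y - x2| then b else 0)
      + (if |x - x3| < |y - x3| then c else 0) := by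
    intro x y
    rw [lvotes, Finset.sum_filter, hsum3 (fun j => if |x - j| < |y - j| then p j else 0)]
  have v12 : lvotes s p x1 x2 = a := by
    rw [votesf,
      if_pos (by rw [abs_of_nonpos (by linarith : x1 - x1 ≤ 0),
        abs_of_nonneg (by linarith : (0:ℝ) ≤ x2 - x1)]; linarith),
      if_neg (by rw [abs_of_nonpos (by linarith : x1 - x2 ≤ 0),
        abs_of_nonpos (by linarith : x2 - x2 ≤ 0)]; push_neg; linarith),
      if_neg (by rw [abs_of_nonpos (by linarith : x1 - x3 ≤ 0),
        abs_of_nonpos (by linarith : x2 - x3 ≤ 0)]; push_neg; linarith)]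
    ring
  have v21 : lvotes s p x2 x1 = b + c := by
    rw [votesf,
      if_neg (by rw [abs_of_nonneg (by linarith : (0:ℝ) ≤ x2 - x1),
        abs_of_nonpos (by linarith : x1 - x1 ≤ 0)]; push_neg; linarith),
      if_pos (by rw [abs_of_nonpos (by linarith : x2 - x2 ≤ 0),
        abs_of_nonpos (by linarith : x1 - x2 ≤ 0)]; linarith),
      if_pos (by rw [abs_of_nonpos (by linarith : x2 - x3 ≤ 0),
        abs_of_nonpos (by linarith : x1 - x3 ≤ 0)]; linarith)]
    ring
  have v23 : lvotes s p x2 x3 = a + b := by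
    rw [votesf,
      if_pos (by rw [abs_of_nonneg (by linarith : (0:ℝ) ≤ x2 - x1),
        abs_of_nonneg (by linarith : (0:ℝ) ≤ x3 - x1)]; linarith),
      if_pos (by rw [abs_of_nonpos (by linarith : x2 - x2 ≤ 0),
        abs_of_nonneg (by linarith : (0:ℝ) ≤ x3 - x2)]; linarith),
      if_neg (by rw [abs_of_nonpos (by linarith : x2 - x3 ≤ 0),
        abs_of_nonpos (by linarith : x3 - x3 ≤ 0)]; push_neg; linarith)]
    ring
  have v32 : lvotes s p x3 x2 = c := by
    rw [votesf,
      if_neg (by rw [abs_of_nonneg (by linarith : (0:ℝ) ≤ x3 - x1),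
        abs_of_nonneg (by linarith : (0:ℝ) ≤ x2 - x1)]; push_neg; linarith),
      if_neg (by rw [abs_of_nonneg (by linarith : (0:ℝ) ≤ x3 - x2),
        abs_of_nonpos (by linarith : x2 - x2 ≤ 0)]; push_neg; linarith),
      if_pos (by rw [abs_of_nonpos (by linarith : x3 - x3 ≤ 0),
        abs_of_nonpos (by linarith : x2 - x3 ≤ 0)]; linarith)]
    ring
  have v13 : lvotes s p x1 x3 = a + (if |x1 - x2| < |x3 - x2| then b else 0) := by
    rw [votesf,
      if_pos (show |x1 - x1| < |x3 - x1| by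
        rw [abs_of_nonpos (by linarith : x1 - x1 ≤ 0),
          abs_of_nonneg (by linarith : (0:ℝ) ≤ x3 - x1)]; linarith),
      if_neg (show ¬ |x1 - x3| < |x3 - x3| by
        rw [abs_of_nonpos (by linarith : x1 - x3 ≤ 0),
          abs_of_nonpos (by linarith : x3 - x3 ≤ 0)]; push_neg; linarith)]
    ring
  have v31 : lvotes s p x3 x1 = c + (if |x3 - x2| < |x1 - x2| then b else 0) := by
    rw [votesf,
      if_neg (show ¬ |x3 - x1| < |x1 - x1| by
        rw [abs_of_nonneg (by linarith : (0:ℝ) ≤ x3 - x1),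
          abs_of_nonpos (by linarith : x1 - x1 ≤ 0)]; push_neg; linarith),
      if_pos (show |x3 - x3| < |x1 - x3| by
        rw [abs_of_nonpos (by linarith : x3 - x3 ≤ 0),
          abs_of_nonpos (by linarith : x1 - x3 ≤ 0)]; linarith)]
    ring
  -- sqrt facts
  have s2 : Real.sqrt 2 ^ 2 = 2 := Real.sq_sqrt (by norm_num)
  have s2a : 1 < Real.sqrt 2 := by nlinarith [Real.sqrt_nonneg 2]
  have s2b : Real.sqrt 2 < 3/2 := by nlinarith [Real.sqrt_nonneg 2]
  have hk1 : (1:ℝ) ≤ 4 - 2*Real.sqrt 2 := by linarith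
  -- diagonal ratios
  have rdiag : ∀ x, 0 < lcost s p x → lr s p x x = 1 := by
    intro x hx
    rw [lr, lwin, lopt, ite_self, ite_self, div_self (ne_of_gt hx)]
  have r11 := rdiag x1 c1pos
  have r22 := rdiag x2 c2pos
  have r33 := rdiag x3 c3pos
  -- strict majority facts
  have hane : a ≠ 1/2 := by
    have := hmaj x1 hm1 x2 hm2 ne12; rwa [v12] at this
  have hcne : c ≠ 1/2 := by
    have := hmaj x3 hm3 x2 hm2 (Ne.symm ne23); rwa [v32] at this
  -- side pair ratios are always 1
  have r12 : lr s p x1 x2 = 1 := by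
    rcases lt_or_gt_of_ne hane with h | h
    · have hcc : lcost s p x2 ≤ lcost s p x1 := by
        rw [hC1, hC2]
        nlinarith [mul_nonneg (show (0:ℝ) ≤ 1 - 2*a by linarith)
          (show (0:ℝ) ≤ x2 - x1 by linarith)]
      rw [lr, lwin, v12, if_neg (by linarith), lopt,
        if_neg (not_lt.2 hcc), div_self (ne_of_gt c2pos)]
    · have hcc : lcost s p x1 < lcost s p x2 := by
        rw [hC1, hC2]
        nlinarith [mul_pos (show (0:ℝ) < 2*a - 1 by linarith)
          (show (0:ℝ) < x2 - x1 by linarith)]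
      rw [lr, lwin, v12, if_pos (by linarith), lopt,
        if_pos hcc, div_self (ne_of_gt c1pos)]
  have r21 : lr s p x2 x1 = 1 := by
    rcases lt_or_gt_of_ne hane with h | h
    · have hcc : lcost s p x2 < lcost s p x1 := by
        rw [hC1, hC2]
        nlinarith [mul_pos (show (0:ℝ) < 1 - 2*a by linarith)
          (show (0:ℝ) < x2 - x1 by linarith)]
      rw [lr, lwin, v21, if_pos (by linarith), lopt,
        if_pos hcc, div_self (ne_of_gt c2pos)]
    · have hcc : lcost s p x1 ≤ lcost s p x2 := by
        rw [hC1, hC2]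
        nlinarith [mul_nonneg (show (0:ℝ) ≤ 2*a - 1 by linarith)
          (show (0:ℝ) ≤ x2 - x1 by linarith)]
      rw [lr, lwin, v21, if_neg (by push_neg; linarith), lopt,
        if_neg (not_lt.2 hcc), div_self (ne_of_gt c1pos)]
  have r23 : lr s p x2 x3 = 1 := by
    rcases lt_or_gt_of_ne hcne with h | h
    · have hcc : lcost s p x2 < lcost s p x3 := by
        rw [hC2, hC3]
        nlinarith [mul_pos (show (0:ℝ) < 1 - 2*c by linarith)
          (show (0:ℝ) < x3 - x2 by linarith)]
      rw [lr, lwin, v23, if_pos (by linarith), lopt,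
        if_pos hcc, div_self (ne_of_gt c2pos)]
    · have hcc : lcost s p x3 ≤ lcost s p x2 := by
        rw [hC2, hC3]
        nlinarith [mul_nonneg (show (0:ℝ) ≤ 2*c - 1 by linarith)
          (show (0:ℝ) ≤ x3 - x2 by linarith)]
      rw [lr, lwin, v23, if_neg (by push_neg; linarith), lopt,
        if_neg (not_lt.2 hcc), div_self (ne_of_gt c3pos)]
  have r32 : lr s p x3 x2 = 1 := by
    rcases lt_or_gt_of_ne hcne with h | h
    · have hcc : lcost s p x2 ≤ lcost s p x3 := by
        rw [hC2, hC3]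
        nlinarith [mul_nonneg (show (0:ℝ) ≤ 1 - 2*c by linarith)
          (show (0:ℝ) ≤ x3 - x2 by linarith)]
      rw [lr, lwin, v32, if_neg (by linarith), lopt,
        if_neg (not_lt.2 hcc), div_self (ne_of_gt c2pos)]
    · have hcc : lcost s p x3 < lcost s p x2 := by
        rw [hC2, hC3]
        nlinarith [mul_pos (show (0:ℝ) < 2*c - 1 by linarith)
          (show (0:ℝ) < x3 - x2 by linarith)]
      rw [lr, lwin, v32, if_pos (by linarith), lopt,
        if_pos hcc, div_self (ne_of_gt c3pos)]
  -- expansion of lsocial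
  have hsoc : lsocial s p p =
      a*a*lr s p x1 x1 + a*b*lr s p x1 x2 + a*c*lr s p x1 x3
      + (b*a*lr s p x2 x1 + b*b*lr s p x2 x2 + b*c*lr s p x2 x3)
      + (c*a*lr s p x3 x1 + c*b*lr s p x3 x2 + c*c*lr s p x3 x3) := by
    rw [lsocial, hsum3 (fun x => ∑ y ∈ s, p x * p y * lr s p x y),
      hsum3 (fun y => p x1 * p y * lr s p x1 y),
      hsum3 (fun y => p x2 * p y * lr s p x2 y),
      hsum3 (fun y => p x3 * p y * lr s p x3 y)]
  have hone : a*a + a*b + a*c + (b*a + b*b + b*c) + (c*a + c*b + c*c) = 1 := by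
    have h2 : (a+b+c)*(a+b+c) = 1 := by rw [habc]; norm_num
    linarith [h2]
  rcases lt_or_gt_of_ne hane with haneg | hapos
  case inr =>
    -- a > 1/2 : x1 wins everything, x1 optimal in its pairs
    have hoptc : lcost s p x1 < lcost s p x3 := by
      rw [hC1, hC3]
      nlinarith [mul_pos hb (show (0:ℝ) < x3 - x2 by linarith),
        mul_pos (show (0:ℝ) < 2*a - 1 by linarith) (show (0:ℝ) < x3 - x1 by linarith)]
    have r13 : lr s p x1 x3 = 1 := by
      rw [lr, lwin, v13, if_pos (by split_ifs <;> linarith), lopt, if_pos hoptc,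
        div_self (ne_of_gt c1pos)]
    have r31 : lr s p x3 x1 = 1 := by
      rw [lr, lwin, v31, if_neg (by split_ifs <;> push_neg <;> linarith), lopt,
        if_neg (not_lt.2 hoptc.le), div_self (ne_of_gt c1pos)]
    rw [hsoc, r11, r22, r33, r12, r21, r23, r32, r13, r31]
    linarith [hone, hk1]
  case inl =>
  rcases lt_or_gt_of_ne hcne with hcneg | hcpos
  case inr =>
    -- c > 1/2 : x3 wins everything, x3 optimal
    have hoptc : lcost s p x3 < lcost s p x1 := by
      rw [hC1, hC3]
      nlinarith [mul_pos hb (show (0:ℝ) < x2 - x1 by linarith),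
        mul_pos (show (0:ℝ) < 2*c - 1 by linarith) (show (0:ℝ) < x3 - x1 by linarith)]
    have r13 : lr s p x1 x3 = 1 := by
      rw [lr, lwin, v13, if_neg (by split_ifs <;> push_neg <;> linarith), lopt,
        if_neg (not_lt.2 hoptc.le), div_self (ne_of_gt c3pos)]
    have r31 : lr s p x3 x1 = 1 := by
      rw [lr, lwin, v31, if_pos (by split_ifs <;> linarith), lopt, if_pos hoptc,
        div_self (ne_of_gt c3pos)]
    rw [hsoc, r11, r22, r33, r12, r21, r23, r32, r13, r31]
    linarith [hone, hk1]
  case inl =>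
  -- a < 1/2, c < 1/2 : the median is x2; the only interesting pair is (x1, x3)
  have hdne : x2 - x1 ≠ x3 - x2 := by
    intro h
    exact hties x2 hm2 x1 hm1 x3 hm3 ne13
      (by rw [abs_of_nonpos (by linarith : x1 - x2 ≤ 0),
        abs_of_nonneg (by linarith : (0:ℝ) ≤ x3 - x2)]; linarith)
  rcases lt_or_gt_of_ne hdne with hd | hd
  · -- x2 closer to x1 : x1 wins the (x1,x3) election
    have habs : |x1 - x2| < |x3 - x2| := by
      rw [abs_of_nonpos (by linarith : x1 - x2 ≤ 0),
        abs_of_nonneg (by linarith : (0:ℝ) ≤ x3 - x2)]; linarith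
    have win13 : lwin s p x1 x3 = x1 := by
      rw [lwin, v13, if_pos habs, if_pos (by linarith)]
    have win31 : lwin s p x3 x1 = x1 := by
      rw [lwin, v31, if_neg (not_lt.2 habs.le), if_neg (by push_neg; linarith)]
    by_cases hopt : lcost s p x1 < lcost s p x3
    · have r13 : lr s p x1 x3 = 1 := by
        rw [lr, win13, lopt, if_pos hopt, div_self (ne_of_gt c1pos)]
      have r31 : lr s p x3 x1 = 1 := by
        rw [lr, win31, lopt, if_neg (not_lt.2 hopt.le), div_self (ne_of_gt c1pos)]
      rw [hsoc, r11, r22, r33, r12, r21, r23, r32, r13, r31]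
      linarith [hone, hk1]
    · have r13 : lr s p x1 x3 = lcost s p x1 / lcost s p x3 := by
        rw [lr, win13, lopt, if_neg hopt]
      have r31 : lr s p x3 x1 = lcost s p x1 / lcost s p x3 := by
        rw [lr, win31, lopt]
        rcases eq_or_lt_of_le (not_lt.1 hopt) with he | hlt
        · rw [if_neg (by rw [he]; exact lt_irrefl _), he]
        · rw [if_pos hlt]
      have kk := key_ineq a b c (x2 - x1) (x3 - x2) ha hc hcneg hb habc
        (by linarith) (by linarith)
      have hρ : 2*a*c*((lcost s p x1 / lcost s p x3) * lcost s p x3)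
          = 2*a*c*(lcost s p x1) := by
        rw [div_mul_cancel₀ _ (ne_of_gt c3pos)]
      rw [hsoc, r11, r22, r33, r12, r21, r23, r32, r13, r31]
      nlinarith only [kk, hρ, c3pos, hC1, hC3, hone, mul_pos ha hc, s2b,
        Real.sqrt_nonneg 2, mul_pos (mul_pos ha hc) c3pos]
  · -- x2 closer to x3 : x3 wins the (x1,x3) election
    have habs : |x3 - x2| < |x1 - x2| := by
      rw [abs_of_nonpos (by linarith : x1 - x2 ≤ 0),
        abs_of_nonneg (by linarith : (0:ℝ) ≤ x3 - x2)]; linarith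
    have win13 : lwin s p x1 x3 = x3 := by
      rw [lwin, v13, if_neg (not_lt.2 habs.le), if_neg (by push_neg; linarith)]
    have win31 : lwin s p x3 x1 = x3 := by
      rw [lwin, v31, if_pos habs, if_pos (by linarith)]
    by_cases hopt : lcost s p x3 < lcost s p x1
    · have r13 : lr s p x1 x3 = 1 := by
        rw [lr, win13, lopt, if_neg (not_lt.2 hopt.le), div_self (ne_of_gt c3pos)]
      have r31 : lr s p x3 x1 = 1 := by
        rw [lr, win31, lopt, if_pos hopt, div_self (ne_of_gt c3pos)]
      rw [hsoc, r11, r22, r33, r12, r21, r23, r32, r13, r31]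
      linarith [hone, hk1]
    · have r13 : lr s p x1 x3 = lcost s p x3 / lcost s p x1 := by
        rw [lr, win13, lopt]
        rcases eq_or_lt_of_le (not_lt.1 hopt) with he | hlt
        · rw [if_neg (by rw [he]; exact lt_irrefl _), he]
        · rw [if_pos hlt]
      have r31 : lr s p x3 x1 = lcost s p x3 / lcost s p x1 := by
        rw [lr, win31, lopt, if_neg hopt]
      have kk := key_ineq c b a (x3 - x2) (x2 - x1) hc ha haneg hb
        (by linarith) (by linarith) (by linarith)
      have hρ : 2*a*c*((lcost s p x3 / lcost s p x1) * lcost s p x1)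
          = 2*a*c*(lcost s p x3) := by
        rw [div_mul_cancel₀ _ (ne_of_gt c1pos)]
      rw [hsoc, r11, r22, r33, r12, r21, r23, r32, r13, r31]
      nlinarith only [kk, hρ, c1pos, hC1, hC3, hone, mul_pos ha hc, s2b,
        Real.sqrt_nonneg 2, mul_pos (mul_pos ha hc) c1pos]
end

section
/- For every ε > 0 there exists a finite voting instance on the real line with candidate distribution p and voter distribution q (with p ≠ q, in general position) such that the expected distortion Social(p,q) of majority voting between two candidates drawn i.i.d. from p is at least 2 − ε. In particular, the upper bound of 2 on the expected distortion with i.i.d. candidates from a distribution different from the voter distribution is tight, already on the line. -/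
open Finset

set_option maxHeartbeats 1600000 in
/-- for every `ε > 0` there is a finite voting instance on the line,
in general position, with candidate distribution `p` different from the voter
distribution `q`, whose expected distortion is at least `2 - ε`.  Hence the upper
bound of 2 for i.i.d. candidates from a distribution different from the voters'
is tight, already on the line. -/
theorem different_distributions_tight (ε : ℝ) (hε : 0 < ε) :
    ∃ (s : Finset ℝ) (p q : ℝ → ℝ),
      (∀ x ∈ s, 0 ≤ p x) ∧ (∑ x ∈ s, p x = 1) ∧
      (∀ x ∈ s, 0 ≤ q x) ∧ (∑ x ∈ s, q x = 1) ∧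
      (∃ x ∈ s, p x ≠ q x) ∧
      NoVoterTies s ∧
      StrictMajority s q ∧
      2 - ε ≤ lsocial s p q := by
  set t : ℝ := min ε 1 / 16 with htdef
  have ht0 : 0 < t := by
    have : 0 < min ε 1 := lt_min hε one_pos
    rw [htdef]; linarith
  have ht16 : t ≤ 1/16 := by
    have : min ε 1 ≤ 1 := min_le_right ε 1
    rw [htdef]; linarith
  have htε : 16 * t ≤ ε := by
    have : min ε 1 ≤ ε := min_le_left ε 1
    rw [htdef]; linarith
  have hne1 : (-1 : ℝ) ≠ 1 := by norm_num
  have hne2 : (-1 : ℝ) ≠ t := by linarith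
  have hne3 : (1 : ℝ) ≠ t := by linarith
  set s : Finset ℝ := {-1, 1, t} with hsdef
  set p : ℝ → ℝ := fun x => if x = t then 0 else 1/2 with hpdef
  set q : ℝ → ℝ := fun x => if x = -1 then 1/2 - t else if x = t then 1/2 + t else 0
    with hqdef
  have hsum : ∀ f : ℝ → ℝ, ∑ x ∈ s, f x = f (-1) + f 1 + f t := by
    intro f
    rw [hsdef, Finset.sum_insert (by simp [hne1, hne2]),
      Finset.sum_insert (by simp [hne3]), Finset.sum_singleton]
    ring
  have hp1 : p (-1) = 1/2 := by simp [hpdef, hne2]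
  have hp2 : p 1 = 1/2 := by simp [hpdef, hne3]
  have hp3 : p t = 0 := by simp [hpdef]
  have hq1 : q (-1) = 1/2 - t := by simp [hqdef]
  have hq2 : q 1 = 0 := by simp [hqdef, hne1.symm, hne3]
  have hq3 : q t = 1/2 + t := by simp [hqdef, hne2.symm]
  -- abs facts
  have a1 : |(-1 : ℝ) - 1| = 2 := by rw [abs_of_nonpos (by norm_num)]; ring
  have a2 : |(1 : ℝ) - (-1)| = 2 := by rw [abs_of_nonneg (by norm_num)]; ring
  have a3 : |(-1 : ℝ) - t| = 1 + t := by rw [abs_of_nonpos (by linarith)]; ring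
  have a4 : |t - (-1)| = 1 + t := by rw [abs_of_nonneg (by linarith)]; ring
  have a5 : |(1 : ℝ) - t| = 1 - t := by rw [abs_of_nonneg (by linarith)]
  have a6 : |t - 1| = 1 - t := by rw [abs_of_nonpos (by linarith)]; ring
  have a0 : ∀ x : ℝ, |x - x| = 0 := by intro x; simp
  -- costs
  have hcm1 : lcost s q (-1) = 1/2 + 3/2 * t + t^2 := by
    rw [lcost, hsum]
    rw [hq1, hq2, hq3, a0, a1, a3]; ring
  have hc1 : lcost s q 1 = 3/2 - 3/2 * t - t^2 := by
    rw [lcost, hsum]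
    rw [hq1, hq2, hq3, a2, a0, a5]; ring
  have hcm1pos : 0 < lcost s q (-1) := by rw [hcm1]; nlinarith
  have hc1pos : 0 < lcost s q 1 := by rw [hc1]; nlinarith
  -- votes
  have hv : ∀ x y : ℝ, lvotes s q x y =
      (if |x - (-1)| < |y - (-1)| then q (-1) else 0)
      + (if |x - 1| < |y - 1| then q 1 else 0)
      + (if |x - t| < |y - t| then q t else 0) := by
    intro x y
    rw [lvotes, Finset.sum_filter, hsum]
  have hv1 : lvotes s q (-1) 1 = 1/2 - t := by
    rw [hv]; simp only [a0, a1, a2, a3, a4, a5, a6]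
    rw [if_pos (by norm_num), if_neg (by norm_num), if_neg (by intro h; linarith), hq1]
    ring
  have hv2 : lvotes s q 1 (-1) = 1/2 + t := by
    rw [hv]; simp only [a0, a1, a2, a3, a4, a5, a6]
    rw [if_neg (by norm_num), if_pos (by norm_num), if_pos (by linarith), hq2, hq3]
    ring
  have hv3 : lvotes s q (-1) t = 1/2 - t := by
    rw [hv]; simp only [a0, a1, a2, a3, a4, a5, a6]
    rw [if_pos (by linarith), if_neg (by intro h; linarith),
      if_neg (by intro h; linarith), hq1]
    ring
  have hv4 : lvotes s q t (-1) = 1/2 + t := by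
    rw [hv]; simp only [a0, a1, a2, a3, a4, a5, a6]
    rw [if_neg (by intro h; linarith), if_pos (by linarith), if_pos (by linarith),
      hq2, hq3]
    ring
  have hv5 : lvotes s q 1 t = 0 := by
    rw [hv]; simp only [a0, a1, a2, a3, a4, a5, a6]
    rw [if_neg (by intro h; linarith), if_pos (by linarith), if_neg (by intro h; linarith),
      hq2]
    ring
  have hv6 : lvotes s q t 1 = 1 := by
    rw [hv]; simp only [a0, a1, a2, a3, a4, a5, a6]
    rw [if_pos (by linarith), if_neg (by intro h; linarith), if_pos (by linarith),
      hq1, hq3]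
    ring
  -- winners and optima for the two relevant elections
  have hw1 : lwin s q (-1) 1 = 1 := by
    have hlt : ¬ (1/2 < lvotes s q (-1) 1) := by rw [hv1]; intro h; linarith
    rw [lwin, if_neg hlt]
  have hw2 : lwin s q 1 (-1) = 1 := by
    have hlt : 1/2 < lvotes s q 1 (-1) := by rw [hv2]; linarith
    rw [lwin, if_pos hlt]
  have hclt : lcost s q (-1) < lcost s q 1 := by rw [hcm1, hc1]; nlinarith
  have ho1 : lopt s q (-1) 1 = -1 := by
    rw [lopt, if_pos hclt]
  have ho2 : lopt s q 1 (-1) = -1 := by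
    rw [lopt, if_neg (not_lt.mpr (le_of_lt hclt))]
  have hself : ∀ x : ℝ, 0 < lcost s q x → lr s q x x = 1 := by
    intro x hx
    have hw : lwin s q x x = x := by rw [lwin]; split <;> rfl
    have ho : lopt s q x x = x := by rw [lopt]; split <;> rfl
    rw [lr, hw, ho, div_self (ne_of_gt hx)]
  have hr1 : lr s q (-1) 1 = lcost s q 1 / lcost s q (-1) := by rw [lr, hw1, ho1]
  have hr2 : lr s q 1 (-1) = lcost s q 1 / lcost s q (-1) := by rw [lr, hw2, ho2]
  have hmem1 : (-1 : ℝ) ∈ s := by simp [hsdef]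
  have hmem2 : (1 : ℝ) ∈ s := by simp [hsdef]
  have hmem3 : t ∈ s := by simp [hsdef]
  refine ⟨s, p, q, ?_, ?_, ?_, ?_, ?_, ?_, ?_, ?_⟩
  · intro x hx
    rw [hpdef]; dsimp only; split <;> norm_num
  · rw [hsum, hp1, hp2, hp3]; ring
  · intro x hx
    rw [hqdef]; dsimp only; split
    · linarith
    · split <;> linarith
  · rw [hsum, hq1, hq2, hq3]; ring
  · exact ⟨1, hmem2, by rw [hp2, hq2]; norm_num⟩
  · -- NoVoterTies
    intro j hj x hx y hy hxy h
    rcases abs_eq_abs.mp h with h' | h'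
    · exact hxy (by linarith)
    · have hsum2 : x + y = 2 * j := by linarith
      simp only [hsdef, Finset.mem_insert, Finset.mem_singleton] at hj hx hy
      rcases hx with rfl | rfl | rfl <;> rcases hy with rfl | rfl | rfl <;>
        rcases hj with rfl | rfl | rfl <;>
        first
          | exact hxy rfl
          | linarith
  · -- StrictMajority
    intro x hx y hy hxy
    simp only [hsdef, Finset.mem_insert, Finset.mem_singleton] at hx hy
    rcases hx with rfl | rfl | rfl <;> rcases hy with rfl | rfl | rfl <;>
      first
        | exact absurd rfl hxy
        | (rw [hv1]; intro h; linarith)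
        | (rw [hv2]; intro h; linarith)
        | (rw [hv3]; intro h; linarith)
        | (rw [hv4]; intro h; linarith)
        | (rw [hv5]; intro h; linarith)
        | (rw [hv6]; intro h; linarith)
  · -- distortion bound
    have hR : 3 - 2 * ε ≤ lcost s q 1 / lcost s q (-1) := by
      rw [le_div_iff₀ hcm1pos, hcm1, hc1]
      nlinarith [sq_nonneg t, mul_pos ht0 ht0]
    have hone1 : lr s q (-1) (-1) = 1 := hself _ hcm1pos
    have hone2 : lr s q 1 1 = 1 := hself _ hc1pos
    rw [lsocial, hsum]
    rw [hsum (fun y => p (-1) * p y * lr s q (-1) y)]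
    rw [hsum (fun y => p 1 * p y * lr s q 1 y)]
    rw [hsum (fun y => p t * p y * lr s q t y)]
    rw [hp1, hp2, hp3, hone1, hone2, hr1, hr2]
    set R := lcost s q 1 / lcost s q (-1) with hRdef
    ring_nf
    have hR' : 3 - 2 * ε ≤ lcost s q 1 * (lcost s q (-1))⁻¹ := by
      rw [← div_eq_mul_inv]; exact hR
    linarith
end

section
/- In any finite metric space with voter distribution q, if candidate i wins the majority election against candidate i' (i.e., the voter mass of points at least as close to i as to i' is at least 1/2), then cost(i) ≤ 3·cost(i'), where cost(x) = ∑_j q(j)·d(x,j). -/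
open Finset

/-- A finite metric space on `n` points. -/
structure FinMetric (n : ℕ) where
  d : Fin n → Fin n → ℝ
  refl : ∀ i, d i i = 0
  symm : ∀ i j, d i j = d j i
  pos : ∀ i j, i ≠ j → 0 < d i j
  triangle : ∀ i j k, d i k ≤ d i j + d j k

/-- Social cost of candidate `i`: average distance to the voters,
distributed according to `q`. -/
noncomputable def mcost {n : ℕ} (M : FinMetric n) (q : Fin n → ℝ) (i : Fin n) : ℝ :=
  ∑ j, q j * M.d i j

/-- Total voter mass strictly preferring candidate `i` over candidate `i'`. -/
noncomputable def mvotes {n : ℕ} (M : FinMetric n) (q : Fin n → ℝ) (i i' : Fin n) : ℝ :=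
  ∑ j ∈ Finset.univ.filter (fun j => M.d i j < M.d i' j), q j

/-- The majority winner of the election between candidates `i` and `i'`. -/
noncomputable def mwin {n : ℕ} (M : FinMetric n) (q : Fin n → ℝ) (i i' : Fin n) : Fin n :=
  if 1/2 < mvotes M q i i' then i else i'

/-- The socially better of the two candidates `i`, `i'`. -/
noncomputable def mopt {n : ℕ} (M : FinMetric n) (q : Fin n → ℝ) (i i' : Fin n) : Fin n :=
  if mcost M q i < mcost M q i' then i else i'

/-- Pairwise distortion of the election between `i` and `i'`. -/
noncomputable def mr {n : ℕ} (M : FinMetric n) (q : Fin n → ℝ) (i i' : Fin n) : ℝ :=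
  mcost M q (mwin M q i i') / mcost M q (mopt M q i i')

/-- Expected distortion: two candidates drawn i.i.d. from `p`, voters distributed as `q`. -/
noncomputable def msocial {n : ℕ} (M : FinMetric n) (p q : Fin n → ℝ) : ℝ :=
  ∑ i, ∑ i', p i * p i' * mr M q i i'

/-- General position: no voter is equidistant from two distinct candidates, every
election has a strict majority winner, and there are no ties in social cost. -/
def MGenPos {n : ℕ} (M : FinMetric n) (q : Fin n → ℝ) : Prop :=
  (∀ j i i' : Fin n, i ≠ i' → M.d i j ≠ M.d i' j) ∧
  (∀ i i' : Fin n, i ≠ i' → mvotes M q i i' ≠ 1/2) ∧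
  (∀ i i' : Fin n, i ≠ i' → mcost M q i ≠ mcost M q i')

/-- if candidate `i` wins the majority election against `i'` (the
voter mass of points at least as close to `i` as to `i'` is at least 1/2), then
`cost(i) ≤ 3 · cost(i')`. -/
theorem winner_cost_le_three (n : ℕ) (M : FinMetric n) (q : Fin n → ℝ)
    (hq : ∀ j, 0 ≤ q j) (hqsum : ∑ j, q j = 1)
    (i i' : Fin n)
    (hwin : 1/2 ≤ ∑ j ∈ Finset.univ.filter (fun j => M.d i j ≤ M.d i' j), q j) :
    mcost M q i ≤ 3 * mcost M q i' := by
  classical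
  have hd0 : ∀ a b, 0 ≤ M.d a b := by
    intro a b
    rcases eq_or_ne a b with rfl | h
    · simp [M.refl]
    · exact (M.pos a b h).le
  set A := Finset.univ.filter (fun j => M.d i j ≤ M.d i' j) with hA
  set D := M.d i i' with hD
  have hcost' : 0 ≤ mcost M q i' :=
    Finset.sum_nonneg fun j _ => mul_nonneg (hq j) (hd0 _ _)
  have hmass : ∑ j ∈ A, q j + ∑ j ∈ Finset.univ.filter (fun j => ¬ M.d i j ≤ M.d i' j), q j = 1 := by
    rw [← hqsum, hA]
    exact Finset.sum_filter_add_sum_filter_not _ _ _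
  have hmassAc : ∑ j ∈ Finset.univ.filter (fun j => ¬ M.d i j ≤ M.d i' j), q j ≤ 1/2 := by
    linarith
  have hmassAc0 : 0 ≤ ∑ j ∈ Finset.univ.filter (fun j => ¬ M.d i j ≤ M.d i' j), q j :=
    Finset.sum_nonneg fun j _ => hq j
  -- On A : D ≤ 2 * d i' j
  have hDle : ∀ j ∈ A, D ≤ 2 * M.d i' j := by
    intro j hj
    rw [hA, Finset.mem_filter] at hj
    have ht := M.triangle i j i'
    have hs : M.d j i' = M.d i' j := M.symm j i'
    linarith [hj.2]
  have hD0 : 0 ≤ D := hd0 _ _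
  -- D ≤ 4 * cost i'
  have h1 : D * (1/2) ≤ D * ∑ j ∈ A, q j :=
    mul_le_mul_of_nonneg_left hwin hD0
  have h2 : D * ∑ j ∈ A, q j ≤ 2 * ∑ j ∈ A, q j * M.d i' j := by
    rw [Finset.mul_sum, Finset.mul_sum]
    refine Finset.sum_le_sum fun j hj => ?_
    have := hDle j hj
    have hqj := hq j
    nlinarith
  have h3 : ∑ j ∈ A, q j * M.d i' j ≤ mcost M q i' := by
    refine Finset.sum_le_sum_of_subset_of_nonneg (Finset.filter_subset _ _) ?_
    intro j _ _
    exact mul_nonneg (hq j) (hd0 _ _)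
  have hD4 : D ≤ 4 * mcost M q i' := by linarith
  -- split cost i
  have hsplit : mcost M q i =
      (∑ j ∈ A, q j * M.d i j) + ∑ j ∈ Finset.univ.filter (fun j => ¬ M.d i j ≤ M.d i' j), q j * M.d i j := by
    rw [mcost, hA]
    exact (Finset.sum_filter_add_sum_filter_not _ _ _).symm
  have hOnA : ∑ j ∈ A, q j * M.d i j ≤ ∑ j ∈ A, q j * M.d i' j := by
    refine Finset.sum_le_sum fun j hj => ?_
    rw [hA, Finset.mem_filter] at hj
    exact mul_le_mul_of_nonneg_left hj.2 (hq j)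
  have hOnAc : ∑ j ∈ Finset.univ.filter (fun j => ¬ M.d i j ≤ M.d i' j), q j * M.d i j ≤
      ∑ j ∈ Finset.univ.filter (fun j => ¬ M.d i j ≤ M.d i' j), q j * (D + M.d i' j) := by
    refine Finset.sum_le_sum fun j hj => ?_
    have ht := M.triangle i i' j
    exact mul_le_mul_of_nonneg_left ht (hq j)
  have hexp : ∑ j ∈ Finset.univ.filter (fun j => ¬ M.d i j ≤ M.d i' j), q j * (D + M.d i' j) =
      D * (∑ j ∈ Finset.univ.filter (fun j => ¬ M.d i j ≤ M.d i' j), q j) +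
      ∑ j ∈ Finset.univ.filter (fun j => ¬ M.d i j ≤ M.d i' j), q j * M.d i' j := by
    rw [Finset.mul_sum, ← Finset.sum_add_distrib]
    refine Finset.sum_congr rfl fun j _ => by ring
  have hsum' : (∑ j ∈ A, q j * M.d i' j) +
      ∑ j ∈ Finset.univ.filter (fun j => ¬ M.d i j ≤ M.d i' j), q j * M.d i' j = mcost M q i' := by
    rw [mcost, hA]
    exact Finset.sum_filter_add_sum_filter_not _ _ _
  have hDmass : D * (∑ j ∈ Finset.univ.filter (fun j => ¬ M.d i j ≤ M.d i' j), q j) ≤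
      (4 * mcost M q i') * (1/2) :=
    mul_le_mul hD4 hmassAc hmassAc0 (by linarith)
  linarith
end

section
/- In any finite metric space with voter distribution q, if candidate i receives at least half the voter mass against candidate i' (i.e., q({j : d(i,j) ≤ d(i',j)}) ≥ 1/2), then cost(i) ≤ cost(i') + d(i,i')/2, where cost(x) = ∑_j q(j)·d(x,j). -/
open Finset

/-- if candidate `i` receives at least half the voter mass against
`i'`, then `cost(i) ≤ cost(i') + d(i,i')/2`. -/
theorem winner_cost_le_loser_add_half_dist (n : ℕ) (M : FinMetric n) (q : Fin n → ℝ)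
    (hq : ∀ j, 0 ≤ q j) (hqsum : ∑ j, q j = 1)
    (i i' : Fin n)
    (hwin : 1/2 ≤ ∑ j ∈ Finset.univ.filter (fun j => M.d i j ≤ M.d i' j), q j) :
    mcost M q i ≤ mcost M q i' + M.d i i' / 2 := by
  set S := Finset.univ.filter (fun j => M.d i j ≤ M.d i' j) with hS
  have hd0 : 0 ≤ M.d i i' := by
    rcases eq_or_ne i i' with h | h
    · simp [h, M.refl]
    · exact (M.pos i i' h).le
  have hcompl : ∑ j ∈ Sᶜ, q j ≤ 1/2 := by
    have h := Finset.sum_add_sum_compl S q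
    rw [hqsum] at h
    linarith
  have h1 : mcost M q i - mcost M q i' ≤ (∑ j ∈ Sᶜ, q j) * M.d i i' := by
    have heq : mcost M q i - mcost M q i' = ∑ j, q j * (M.d i j - M.d i' j) := by
      simp [mcost, mul_sub, Finset.sum_sub_distrib]
    rw [heq, ← Finset.sum_add_sum_compl S, Finset.sum_mul]
    have hA : ∑ j ∈ S, q j * (M.d i j - M.d i' j) ≤ 0 := by
      apply Finset.sum_nonpos
      intro j hj
      rw [hS, Finset.mem_filter] at hj
      exact mul_nonpos_of_nonneg_of_nonpos (hq j) (by linarith [hj.2])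
    have hB : ∑ j ∈ Sᶜ, q j * (M.d i j - M.d i' j) ≤ ∑ j ∈ Sᶜ, q j * M.d i i' := by
      apply Finset.sum_le_sum
      intro j _
      apply mul_le_mul_of_nonneg_left _ (hq j)
      have := M.triangle i i' j
      linarith
    linarith
  have h2 : (∑ j ∈ Sᶜ, q j) * M.d i i' ≤ 1/2 * M.d i i' :=
    mul_le_mul_of_nonneg_right hcompl hd0
  linarith
end

section
/- Let α ≥ 1, let p = (p₁, …, pₙ) be a probability vector, and let c₁ ≤ c₂ ≤ … ≤ cₙ be positive real numbers. Then 2·∑_{i < j, c_j ≤ α·c_i} p_i·p_j·(c_j/c_i − 1) ≤ (α − 1)/2. -/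
open Finset MeasureTheory

set_option maxHeartbeats 1000000

/- integrability of floor-type step functions -/
private lemma floor_shift_integrable (t a b : ℝ) :
    IntervalIntegrable (fun θ : ℝ => ((⌊t - θ⌋ : ℤ) : ℝ)) volume a b := by
  apply AntitoneOn.intervalIntegrable
  intro u _ v _ huv
  exact Int.cast_le.mpr (Int.floor_le_floor (by linarith))

private lemma floor_integrable (a b : ℝ) :
    IntervalIntegrable (fun s : ℝ => ((⌊s⌋ : ℤ) : ℝ)) volume a b := by
  apply MonotoneOn.intervalIntegrable
  intro u _ v _ huv
  exact Int.cast_le.mpr (Int.floor_le_floor huv)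

private lemma integral_floor_unit (t : ℝ) :
    ∫ s in (t - 1)..t, ((⌊s⌋ : ℤ) : ℝ) = t - 1 := by
  set m : ℤ := ⌊t⌋ with hm
  have hm1 : (m : ℝ) ≤ t := Int.floor_le t
  have hm2 : t - 1 ≤ (m : ℝ) := by
    have := Int.lt_floor_add_one t; push_cast; linarith
  have e1 : (∫ s in (t - 1)..(m : ℝ), ((⌊s⌋ : ℤ) : ℝ))
      = ((m : ℝ) - (t - 1)) * ((m : ℝ) - 1) := by
    have hae : ∀ᵐ (s : ℝ) ∂volume, s ≠ (m : ℝ) := by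
      refine MeasureTheory.ae_iff.mpr ?_
      have : {s : ℝ | ¬ s ≠ (m : ℝ)} = {((m : ℝ))} := by ext s; simp
      rw [this]; exact Real.volume_singleton
    rw [intervalIntegral.integral_congr_ae (g := fun _ => ((m : ℝ) - 1)) ?_]
    · rw [intervalIntegral.integral_const, smul_eq_mul]
    · filter_upwards [hae] with s hs hmem
      rw [Set.uIoc_of_le hm2] at hmem
      have h1 : (m : ℝ) - 1 ≤ s := by linarith [hmem.1]
      have h2 : s < (m : ℝ) := lt_of_le_of_ne hmem.2 hs
      have : ⌊s⌋ = m - 1 := by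
        rw [Int.floor_eq_iff] <;> push_cast <;> constructor <;> linarith
      rw [this]; push_cast; ring
  have e2 : (∫ s in (m : ℝ)..t, ((⌊s⌋ : ℤ) : ℝ)) = (t - (m : ℝ)) * (m : ℝ) := by
    rw [intervalIntegral.integral_congr (g := fun _ => ((m : ℝ))) ?_]
    · rw [intervalIntegral.integral_const, smul_eq_mul]
    · intro s hs
      rw [Set.uIcc_of_le hm1] at hs
      have h1 : (m : ℝ) ≤ s := hs.1
      have h2 : s < (m : ℝ) + 1 := by
        have := Int.lt_floor_add_one t
        have : t < (m : ℝ) + 1 := by push_cast at this ⊢; linarith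
        linarith [hs.2]
      have : ⌊s⌋ = m := by
        rw [Int.floor_eq_iff] <;> push_cast <;> constructor <;> linarith
      simp [this]
  have hadd := intervalIntegral.integral_add_adjacent_intervals
    (floor_integrable (t - 1) (m : ℝ)) (floor_integrable (m : ℝ) t)
  rw [e1, e2] at hadd
  rw [← hadd]; ring

private lemma integral_floor_shift (t : ℝ) :
    ∫ θ in (0 : ℝ)..1, ((⌊t - θ⌋ : ℤ) : ℝ) = t - 1 := by
  have h := intervalIntegral.integral_comp_sub_left
    (a := (0 : ℝ)) (b := 1) (fun s : ℝ => ((⌊s⌋ : ℤ) : ℝ)) t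
  rw [h, sub_zero]
  exact integral_floor_unit t

private lemma integral_floor_diff (u v : ℝ) :
    ∫ θ in (0 : ℝ)..1, ((⌊v - θ⌋ - ⌊u - θ⌋ : ℤ) : ℝ) = v - u := by
  have h : (∫ θ in (0 : ℝ)..1, (((⌊v - θ⌋ : ℤ) : ℝ) - ((⌊u - θ⌋ : ℤ) : ℝ)))
      = (v - 1) - (u - 1) := by
    rw [intervalIntegral.integral_sub (floor_shift_integrable v 0 1)
      (floor_shift_integrable u 0 1), integral_floor_shift, integral_floor_shift]
  have : (fun θ : ℝ => ((⌊v - θ⌋ - ⌊u - θ⌋ : ℤ) : ℝ))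
      = fun θ : ℝ => (((⌊v - θ⌋ : ℤ) : ℝ) - ((⌊u - θ⌋ : ℤ) : ℝ)) := by
    funext θ; push_cast; ring
  rw [this, h]; ring

/- pointwise parity-cut bound -/
private lemma pointwise_bound {n : ℕ} (p x : Fin n → ℝ) (hp : ∀ i, 0 ≤ p i)
    (hpsum : ∑ i, p i = 1) (E : Finset (Fin n × Fin n))
    (hE : ∀ q ∈ E, x q.1 ≤ x q.2 ∧ x q.2 ≤ x q.1 + 1) (θ : ℝ) :
    ∑ q ∈ E, 2 * p q.1 * p q.2 * ((⌊x q.2 - θ⌋ - ⌊x q.1 - θ⌋ : ℤ) : ℝ) ≤ 1 / 2 := by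
  classical
  set f : Fin n → ℤ := fun i => ⌊x i - θ⌋ with hf
  have hD : ∀ q ∈ E, f q.1 ≤ f q.2 ∧ f q.2 ≤ f q.1 + 1 := by
    intro q hq
    obtain ⟨h1, h2⟩ := hE q hq
    constructor
    · exact Int.floor_le_floor (by linarith)
    · calc f q.2 ≤ ⌊(x q.1 - θ) + 1⌋ := Int.floor_le_floor (by linarith)
        _ = f q.1 + 1 := Int.floor_add_one _
  set A : ℝ := ∑ i ∈ univ.filter (fun i => Even (f i)), p i with hA
  set B : ℝ := ∑ i ∈ univ.filter (fun i => ¬ Even (f i)), p i with hB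
  have hAB : A + B = 1 := by
    rw [hA, hB, Finset.sum_filter_add_sum_filter_not]; exact hpsum
  have hA0 : 0 ≤ A := Finset.sum_nonneg fun i _ => hp i
  have hB0 : 0 ≤ B := Finset.sum_nonneg fun i _ => hp i
  set E1 : Finset (Fin n × Fin n) := E.filter (fun q => f q.2 = f q.1 + 1) with hE1
  have hsplit : ∑ q ∈ E, 2 * p q.1 * p q.2 * ((⌊x q.2 - θ⌋ - ⌊x q.1 - θ⌋ : ℤ) : ℝ)
      = ∑ q ∈ E1, 2 * p q.1 * p q.2 := by
    rw [hE1, Finset.sum_filter]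
    apply Finset.sum_congr rfl
    intro q hq
    by_cases h : f q.2 = f q.1 + 1
    · rw [if_pos h]
      have : (⌊x q.2 - θ⌋ - ⌊x q.1 - θ⌋ : ℤ) = 1 := by
        simp only [hf] at h; omega
      rw [this]; push_cast; ring
    · rw [if_neg h]
      have hD' := hD q hq
      have : (⌊x q.2 - θ⌋ - ⌊x q.1 - θ⌋ : ℤ) = 0 := by
        simp only [hf] at hD' h; omega
      rw [this]; push_cast; ring
  rw [hsplit]
  -- orient each pair so that the even-floor endpoint comes first
  set φ : Fin n × Fin n → Fin n × Fin n := fun q => if Even (f q.1) then q else q.swap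
    with hφ
  have hinj : ∀ q ∈ E1, ∀ q' ∈ E1, φ q = φ q' → q = q' := by
    intro q hq q' hq' heq
    have h1 : f q.2 = f q.1 + 1 := (Finset.mem_filter.mp hq).2
    have h2 : f q'.2 = f q'.1 + 1 := (Finset.mem_filter.mp hq').2
    simp only [hφ] at heq
    by_cases c1 : Even (f q.1) <;> by_cases c2 : Even (f q'.1) <;>
      simp only [c1, c2, if_pos, if_neg, if_true, if_false] at heq
    · exact heq
    · exfalso
      have e1 : q.1 = q'.2 := by rw [heq, Prod.fst_swap]
      have e2 : q.2 = q'.1 := by rw [heq, Prod.snd_swap]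
      rw [e1, e2] at h1; omega
    · exfalso
      have e1 : q.2 = q'.1 := by rw [← heq, Prod.fst_swap]
      have e2 : q.1 = q'.2 := by rw [← heq, Prod.snd_swap]
      rw [e1, e2] at h1; omega
    · have := congrArg Prod.swap heq
      simpa using this
  have himg : E1.image φ ⊆ (univ ×ˢ univ).filter
      (fun q => Even (f q.1) ∧ ¬ Even (f q.2)) := by
    intro r hr
    obtain ⟨q, hq, hqr⟩ := Finset.mem_image.mp hr
    have h1 : f q.2 = f q.1 + 1 := (Finset.mem_filter.mp hq).2
    rw [Finset.mem_filter]
    refine ⟨Finset.mem_product.mpr ⟨Finset.mem_univ _, Finset.mem_univ _⟩, ?_⟩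
    simp only [hφ] at hqr
    by_cases c1 : Even (f q.1)
    · rw [if_pos c1] at hqr
      subst hqr
      exact ⟨c1, by rw [h1]; simp [Int.even_add_one, c1]⟩
    · rw [if_neg c1] at hqr
      subst hqr
      refine ⟨?_, by simpa using c1⟩
      simp only [Prod.fst_swap]
      rw [h1]; simpa [Int.even_add_one] using c1
  have step1 : ∑ q ∈ E1, 2 * p q.1 * p q.2
      = ∑ r ∈ E1.image φ, 2 * p r.1 * p r.2 := by
    rw [Finset.sum_image hinj]
    apply Finset.sum_congr rfl
    intro q hq
    simp only [hφ]
    by_cases c1 : Even (f q.1)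
    · rw [if_pos c1]
    · rw [if_neg c1]; simp [Prod.fst_swap, Prod.snd_swap]; ring
  have step2 : ∑ r ∈ E1.image φ, 2 * p r.1 * p r.2
      ≤ ∑ r ∈ (univ ×ˢ univ).filter (fun q => Even (f q.1) ∧ ¬ Even (f q.2)),
          2 * p r.1 * p r.2 := by
    apply Finset.sum_le_sum_of_subset_of_nonneg himg
    intro r _ _
    have := hp r.1; have := hp r.2; positivity
  have hCeq : (univ ×ˢ univ).filter (fun q => Even (f q.1) ∧ ¬ Even (f q.2))
      = (univ.filter fun i => Even (f i)) ×ˢ (univ.filter fun j => ¬ Even (f j)) := by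
    ext ⟨i, j⟩
    simp only [Finset.mem_filter, Finset.mem_product, Finset.mem_univ, true_and]
  have step3 : ∑ r ∈ (univ ×ˢ univ).filter (fun q => Even (f q.1) ∧ ¬ Even (f q.2)),
      2 * p r.1 * p r.2 = 2 * A * B := by
    rw [hCeq, Finset.sum_product, hA, hB]
    calc ∑ i ∈ univ.filter (fun i => Even (f i)), ∑ j ∈ univ.filter (fun j => ¬ Even (f j)),
          2 * p i * p j
        = ∑ i ∈ univ.filter (fun i => Even (f i)),
            (2 * p i) * ∑ j ∈ univ.filter (fun j => ¬ Even (f j)), p j := by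
          refine Finset.sum_congr rfl fun i _ => ?_
          rw [Finset.mul_sum]
      _ = 2 * (∑ i ∈ univ.filter (fun i => Even (f i)), p i)
            * ∑ j ∈ univ.filter (fun j => ¬ Even (f j)), p j := by
          rw [← Finset.sum_mul, ← Finset.mul_sum]
  have : 2 * A * B ≤ 1 / 2 := by nlinarith [sq_nonneg (A - B)]
  calc ∑ q ∈ E1, 2 * p q.1 * p q.2
      = ∑ r ∈ E1.image φ, 2 * p r.1 * p r.2 := step1
    _ ≤ 2 * A * B := by rw [← step3]; exact step2
    _ ≤ 1 / 2 := this

/- main combinatorial lemma -/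
private lemma key_pair_sum {n : ℕ} (p x : Fin n → ℝ) (hp : ∀ i, 0 ≤ p i)
    (hpsum : ∑ i, p i = 1) (E : Finset (Fin n × Fin n))
    (hE : ∀ q ∈ E, x q.1 ≤ x q.2 ∧ x q.2 ≤ x q.1 + 1) :
    ∑ q ∈ E, 2 * p q.1 * p q.2 * (x q.2 - x q.1) ≤ 1 / 2 := by
  have hrw : ∀ q ∈ E, 2 * p q.1 * p q.2 * (x q.2 - x q.1)
      = ∫ θ in (0 : ℝ)..1,
          2 * p q.1 * p q.2 * ((⌊x q.2 - θ⌋ - ⌊x q.1 - θ⌋ : ℤ) : ℝ) := by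
    intro q _
    rw [intervalIntegral.integral_const_mul, integral_floor_diff]
  have hint : ∀ q ∈ E, IntervalIntegrable
      (fun θ : ℝ => 2 * p q.1 * p q.2 * ((⌊x q.2 - θ⌋ - ⌊x q.1 - θ⌋ : ℤ) : ℝ))
      volume 0 1 := by
    intro q _
    have hfun : (fun θ : ℝ => 2 * p q.1 * p q.2 * ((⌊x q.2 - θ⌋ - ⌊x q.1 - θ⌋ : ℤ) : ℝ))
        = fun θ : ℝ => 2 * p q.1 * p q.2
            * (((⌊x q.2 - θ⌋ : ℤ) : ℝ) - ((⌊x q.1 - θ⌋ : ℤ) : ℝ)) := by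
      funext θ; push_cast; ring
    rw [hfun]
    exact ((floor_shift_integrable (x q.2) 0 1).sub
      (floor_shift_integrable (x q.1) 0 1)).const_mul _
  calc ∑ q ∈ E, 2 * p q.1 * p q.2 * (x q.2 - x q.1)
      = ∑ q ∈ E, ∫ θ in (0 : ℝ)..1,
          2 * p q.1 * p q.2 * ((⌊x q.2 - θ⌋ - ⌊x q.1 - θ⌋ : ℤ) : ℝ) :=
        Finset.sum_congr rfl hrw
    _ = ∫ θ in (0 : ℝ)..1,
          ∑ q ∈ E, 2 * p q.1 * p q.2 * ((⌊x q.2 - θ⌋ - ⌊x q.1 - θ⌋ : ℤ) : ℝ) :=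
        (intervalIntegral.integral_finset_sum hint).symm
    _ ≤ ∫ _θ in (0 : ℝ)..1, (1 / 2 : ℝ) :=
        intervalIntegral.integral_mono_on (by norm_num)
          (by
            have h := IntervalIntegrable.sum E hint
            have heq : (∑ q ∈ E, fun θ : ℝ =>
                2 * p q.1 * p q.2 * ((⌊x q.2 - θ⌋ - ⌊x q.1 - θ⌋ : ℤ) : ℝ))
                = fun θ : ℝ => ∑ q ∈ E,
                    2 * p q.1 * p q.2 * ((⌊x q.2 - θ⌋ - ⌊x q.1 - θ⌋ : ℤ) : ℝ) := by
              funext θ; simp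
            rwa [heq] at h)
          intervalIntegrable_const
          (fun θ _ => pointwise_bound p x hp hpsum E hE θ)
    _ = 1 / 2 := by simp

/- convexity step: r - 1 ≤ (α-1) log_α r for 1 ≤ r ≤ α -/
private lemma ratio_le (α : ℝ) (hα : 1 < α) (a b : ℝ) (ha : 0 < a) (hb : 0 < b)
    (hab : a ≤ b) (hba : b ≤ α * a) :
    b / a - 1 ≤ (α - 1) * (Real.log b / Real.log α - Real.log a / Real.log α) := by
  have hlogα : 0 < Real.log α := Real.log_pos hα
  set r : ℝ := b / a with hr
  have hr0 : 0 < r := div_pos hb ha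
  have hr1 : 1 ≤ r := (one_le_div ha).mpr hab
  have hrα : r ≤ α := (div_le_iff₀ ha).mpr (by linarith)
  set t : ℝ := Real.log r / Real.log α with ht
  have ht0 : 0 ≤ t := div_nonneg (Real.log_nonneg hr1) hlogα.le
  have ht1 : t ≤ 1 := by
    rw [ht, div_le_one hlogα]
    exact Real.log_le_log hr0 hrα
  have hconv := convexOn_exp.2 (Set.mem_univ (0 : ℝ)) (Set.mem_univ (Real.log α))
    (by linarith : (0:ℝ) ≤ 1 - t) ht0 (by ring)
  simp only [smul_eq_mul, mul_zero, zero_add, Real.exp_zero, Real.exp_log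
    (by linarith : (0:ℝ) < α)] at hconv
  have hexp : Real.exp (t * Real.log α) = r := by
    rw [ht, div_mul_cancel₀ _ hlogα.ne', Real.exp_log hr0]
  rw [hexp] at hconv
  -- hconv : r ≤ (1 - t) * 1 + t * α
  have hlogr : Real.log r = Real.log b - Real.log a := Real.log_div hb.ne' ha.ne'
  have : Real.log b / Real.log α - Real.log a / Real.log α = t := by
    rw [ht, hlogr]; ring
  rw [this]
  nlinarith

/-- for `α ≥ 1`, a probability vector `p` and positive nondecreasing
costs `c₁ ≤ … ≤ cₙ`, we have
`2 · ∑_{i < j, c j ≤ α·c i} p i · p j · (c j / c i − 1) ≤ (α − 1)/2`. -/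
theorem csoc_upper_bound (n : ℕ) (α : ℝ) (hα : 1 ≤ α)
    (p c : Fin n → ℝ)
    (hp : ∀ i, 0 ≤ p i) (hpsum : ∑ i, p i = 1)
    (hc : ∀ i, 0 < c i) (hmono : Monotone c) :
    2 * ∑ i : Fin n, ∑ j ∈ Finset.univ.filter (fun j => i < j ∧ c j ≤ α * c i),
        p i * p j * (c j / c i - 1) ≤ (α - 1) / 2 := by
  classical
  set E : Finset (Fin n × Fin n) :=
    (univ ×ˢ univ).filter (fun q => q.1 < q.2 ∧ c q.2 ≤ α * c q.1) with hEdef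
  have hconv : ∑ i : Fin n, ∑ j ∈ Finset.univ.filter (fun j => i < j ∧ c j ≤ α * c i),
      p i * p j * (c j / c i - 1) = ∑ q ∈ E, p q.1 * p q.2 * (c q.2 / c q.1 - 1) := by
    rw [hEdef, Finset.sum_filter, Finset.sum_product]
    apply Finset.sum_congr rfl
    intro i _
    rw [Finset.sum_filter]
  rw [hconv]
  rcases eq_or_lt_of_le hα with heq | hαgt
  · -- α = 1
    have hz : ∀ q ∈ E, p q.1 * p q.2 * (c q.2 / c q.1 - 1) = 0 := by
      intro q hq
      rw [hEdef, Finset.mem_filter] at hq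
      obtain ⟨_, hlt, hle⟩ := hq
      have h1 : c q.1 ≤ c q.2 := hmono hlt.le
      have h2 : c q.2 ≤ c q.1 := by rw [← heq] at hle; linarith
      have : c q.2 = c q.1 := le_antisymm h2 h1
      rw [this, div_self (hc q.1).ne']
      ring
    rw [Finset.sum_eq_zero hz]
    rw [← heq]; norm_num
  · -- α > 1
    have hlogα : 0 < Real.log α := Real.log_pos hαgt
    set x : Fin n → ℝ := fun i => Real.log (c i) / Real.log α with hx
    have hEx : ∀ q ∈ E, x q.1 ≤ x q.2 ∧ x q.2 ≤ x q.1 + 1 := by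
      intro q hq
      rw [hEdef, Finset.mem_filter] at hq
      obtain ⟨_, hlt, hle⟩ := hq
      have hc1 := hc q.1
      have hc2 := hc q.2
      have hle12 : Real.log (c q.1) ≤ Real.log (c q.2) :=
        Real.log_le_log hc1 (hmono hlt.le)
      constructor
      · simp only [hx]
        exact div_le_div_of_nonneg_right hle12 hlogα.le
      · have h2 : Real.log (c q.2) ≤ Real.log α + Real.log (c q.1) := by
          calc Real.log (c q.2) ≤ Real.log (α * c q.1) := Real.log_le_log hc2 hle
            _ = Real.log α + Real.log (c q.1) := Real.log_mul (by positivity) hc1.ne'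
        have h3 : Real.log (c q.2) / Real.log α
            ≤ (Real.log α + Real.log (c q.1)) / Real.log α :=
          div_le_div_of_nonneg_right h2 hlogα.le
        rw [add_div, div_self hlogα.ne'] at h3
        simp only [hx]
        linarith
    have hterm : ∀ q ∈ E, p q.1 * p q.2 * (c q.2 / c q.1 - 1)
        ≤ (α - 1) * (p q.1 * p q.2 * (x q.2 - x q.1)) := by
      intro q hq
      rw [hEdef, Finset.mem_filter] at hq
      obtain ⟨_, hlt, hle⟩ := hq
      have hpp : 0 ≤ p q.1 * p q.2 := mul_nonneg (hp q.1) (hp q.2)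
      have hr' : c q.2 / c q.1 - 1 ≤ (α - 1) * (x q.2 - x q.1) := by
        simp only [hx]
        exact ratio_le α hαgt (c q.1) (c q.2) (hc q.1) (hc q.2) (hmono hlt.le) hle
      calc p q.1 * p q.2 * (c q.2 / c q.1 - 1)
          ≤ p q.1 * p q.2 * ((α - 1) * (x q.2 - x q.1)) :=
            mul_le_mul_of_nonneg_left hr' hpp
        _ = (α - 1) * (p q.1 * p q.2 * (x q.2 - x q.1)) := by ring
    have hsum1 : ∑ q ∈ E, p q.1 * p q.2 * (c q.2 / c q.1 - 1)
        ≤ ∑ q ∈ E, (α - 1) * (p q.1 * p q.2 * (x q.2 - x q.1)) := Finset.sum_le_sum hterm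
    have h2 : ∑ q ∈ E, 2 * p q.1 * p q.2 * (x q.2 - x q.1) ≤ 1 / 2 :=
      key_pair_sum p x hp hpsum E hEx
    calc 2 * ∑ q ∈ E, p q.1 * p q.2 * (c q.2 / c q.1 - 1)
        ≤ 2 * ∑ q ∈ E, (α - 1) * (p q.1 * p q.2 * (x q.2 - x q.1)) := by linarith
      _ = (α - 1) * ∑ q ∈ E, 2 * p q.1 * p q.2 * (x q.2 - x q.1) := by
          rw [Finset.mul_sum, Finset.mul_sum]
          exact Finset.sum_congr rfl fun q _ => by ring
      _ ≤ (α - 1) * (1 / 2) := mul_le_mul_of_nonneg_left h2 (by linarith)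
      _ = (α - 1) / 2 := by ring
end
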